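/- Let {R_α : α ∈ S} be a family of commutative rings and R = ∏_{α∈S} R_α the product ring. Then R is a UPW-ring if and only if each R_α is a UPW-ring. -/

import Mathlib

/-! `aR ∩ bR = 0` says that every common multiple `r a = s b` vanishes, and in a product
this holds iff it holds in every coordinate (test it on elements supported at a single
coordinate). Since annihilators and units of a product are also computed coordinatewise,
witnesses for the product are assembled from witnesses in the factors, and conversely a pair
`a, b` in a factor `R i` is handled by placing it at coordinate `i` of the product. -/

/-- `R` is a UPW-ring: for all `a b` with `aR ⊓ bR = 0`, `Ann(a) + Ann(b)` contains a
unit. -/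
def IsUPWRing (R : Type*) [CommRing R] : Prop :=
  ∀ a b : R, Ideal.span {a} ⊓ Ideal.span {b} = ⊥ →
    ∃ x y : R, x * a = 0 ∧ y * b = 0 ∧ IsUnit (x + y)

theorem Ideal.span_singleton_inf_span_singleton_eq_bot_iff {R : Type*} [CommSemiring R]
    {a b : R} : span {a} ⊓ span {b} = ⊥ ↔ ∀ r s : R, r * a = s * b → r * a = 0 := by
  simp only [eq_bot_iff, SetLike.le_def, mem_inf, mem_span_singleton', mem_bot]
  constructor
  · intro h r s hrs
    exact h ⟨⟨r, rfl⟩, ⟨s, hrs.symm⟩⟩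
  · rintro h z ⟨⟨r, rfl⟩, ⟨s, hs⟩⟩
    exact h r s hs.symm

theorem Pi.span_singleton_inf_span_singleton_eq_bot_iff {ι : Type*} {R : ι → Type*}
    [∀ i, CommSemiring (R i)] {a b : ∀ i, R i} :
    Ideal.span {a} ⊓ Ideal.span {b} = ⊥ ↔ ∀ i, Ideal.span {a i} ⊓ Ideal.span {b i} = ⊥ := by
  classical
  simp only [Ideal.span_singleton_inf_span_singleton_eq_bot_iff]
  constructor
  · intro h i r s hrs
    apply Pi.single_injective i
    rw [Pi.single_mul_left, Pi.single_zero]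
    exact h _ _ (by rw [← Pi.single_mul_left, ← Pi.single_mul_left, hrs])
  · intro h r s hrs
    funext i
    exact h i (r i) (s i) (congrFun hrs i)

theorem IsUPWRing.pi {ι : Type*} {R : ι → Type*} [∀ i, CommRing (R i)]
    (h : ∀ i, IsUPWRing (R i)) : IsUPWRing (∀ i, R i) := by
  intro a b hab
  rw [Pi.span_singleton_inf_span_singleton_eq_bot_iff] at hab
  choose x y hx hy hxy using fun i => h i (a i) (b i) (hab i)
  exact ⟨x, y, funext hx, funext hy, Pi.isUnit_iff.mpr hxy⟩

theorem IsUPWRing.of_pi {ι : Type*} {R : ι → Type*} [∀ i, CommRing (R i)]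
    (h : IsUPWRing (∀ i, R i)) (i : ι) : IsUPWRing (R i) := by
  classical
  intro a b hab
  have hsingle : Ideal.span {Pi.single i a} ⊓ Ideal.span {Pi.single i b} = ⊥ := by
    rw [Pi.span_singleton_inf_span_singleton_eq_bot_iff]
    intro j
    obtain rfl | hj := eq_or_ne j i
    · simpa using hab
    · simp [Pi.single_eq_of_ne hj]
  obtain ⟨x, y, hx, hy, hxy⟩ := h _ _ hsingle
  refine ⟨x i, y i, ?_, ?_, hxy.apply i⟩
  · simpa using congrFun hx i
  · simpa using congrFun hy i

/-- A product of commutative rings is a UPW-ring iff each factor is. -/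
theorem stmt3 {S : Type*} (R : S → Type*) [∀ α, CommRing (R α)] :
    IsUPWRing (∀ α, R α) ↔ ∀ α, IsUPWRing (R α) :=
  ⟨IsUPWRing.of_pi, IsUPWRing.pi⟩
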